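/- If the reservation quotas are a smart reserve, then μ^JSA weakly dominates μ^BASE for disadvantaged students: μ^JSA(s) ≥_s μ^BASE(s) for every disadvantaged student s ∈ S^m. -/

import Mathlib

/-!
Common formalization of school-choice instances with reserved seats
(minority reserve, joint seat allocation, discovery program).

Conventions:
* `prio c s` is the priority rank of student `s` at school `c`
  (smaller value = higher priority); injectivity encodes a strict priority order.
* `pref s o` is the preference rank of outcome `o : Option C` for student `s`
  (smaller value = more preferred); `none` denotes being unmatched, and a school
  `c` is acceptable to `s` iff `pref s (some c) < pref s none`.
-/

open Finset

structure SchoolChoice (S C : Type*) [Fintype S] [DecidableEq S] [Fintype C] [DecidableEq C] where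
  /-- the set of disadvantaged (minority) students; the rest are advantaged -/
  dis : Finset S
  /-- preference rank of each outcome (school or `none` = unmatched) for each student -/
  pref : S → Option C → ℕ
  pref_inj : ∀ s, Function.Injective (pref s)
  /-- priority rank of each student at each school (lower = higher priority) -/
  prio : C → S → ℕ
  prio_inj : ∀ c, Function.Injective (prio c)
  /-- quota of each school -/
  q : C → ℕ
  /-- reservation quota of each school -/
  qR : C → ℕ
  qR_le : ∀ c, qR c ≤ q c

namespace SchoolChoice

variable {S C : Type*} [Fintype S] [DecidableEq S] [Fintype C] [DecidableEq C]

/-- `max(T, >_c, k)`: the `min(k, |T|)` highest-priority students of `T` at school `c`. -/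
def maxSet (I : SchoolChoice S C) (c : C) (T : Finset S) (k : ℕ) : Finset S :=
  T.filter fun s => (T.filter fun t => I.prio c t < I.prio c s).card < k

/-- baseline choice function `C^BASE_c` -/
def CBASE (I : SchoolChoice S C) (c : C) (T : Finset S) : Finset S :=
  I.maxSet c T (I.q c)

/-- `S1^R` of the minority-reserve choice function -/
def mrRes (I : SchoolChoice S C) (c : C) (T : Finset S) : Finset S :=
  I.maxSet c (T ∩ I.dis) (I.qR c)

/-- minority-reserve choice function `C^MR_c` -/
def CMR (I : SchoolChoice S C) (c : C) (T : Finset S) : Finset S :=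
  I.mrRes c T ∪ I.maxSet c (T \ I.mrRes c T) (I.q c - (I.mrRes c T).card)

/-- `S1^G` of the joint-seat-allocation choice function -/
def jsaGen (I : SchoolChoice S C) (c : C) (T : Finset S) : Finset S :=
  I.maxSet c T (I.q c - I.qR c)

/-- `S1^R` of the joint-seat-allocation choice function -/
def jsaRes (I : SchoolChoice S C) (c : C) (T : Finset S) : Finset S :=
  I.maxSet c ((T ∩ I.dis) \ I.jsaGen c T) (I.qR c)

/-- joint-seat-allocation choice function `C^JSA_c` -/
def CJSA (I : SchoolChoice S C) (c : C) (T : Finset S) : Finset S :=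
  I.jsaGen c T ∪ I.jsaRes c T ∪
    I.maxSet c (T \ (I.jsaGen c T ∪ I.jsaRes c T))
      (I.q c - (I.jsaGen c T ∪ I.jsaRes c T).card)

/-- school `c` is acceptable to student `s` -/
def acceptable (I : SchoolChoice S C) (s : S) (c : C) : Prop :=
  I.pref s (some c) < I.pref s none

/-- `μ(c)`: the set of students assigned to school `c` by `μ` -/
def assigned (I : SchoolChoice S C) (μ : S → Option C) (c : C) : Finset S :=
  Finset.univ.filter fun s => μ s = some c

/-- `μ` is a matching: students are assigned only acceptable schools, quotas respected -/
def IsMatching (I : SchoolChoice S C) (μ : S → Option C) : Prop :=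
  (∀ s c, μ s = some c → I.acceptable s c) ∧ ∀ c, (I.assigned μ c).card ≤ I.q c

/-- `μ` is stable w.r.t. the choice functions `Ch`: it is a matching and no pair
`(s, c)` with `c` acceptable to `s` satisfies `c >_s μ(s)` and `s ∈ Ch c (μ(c) ∪ {s})`. -/
def IsStable (I : SchoolChoice S C) (Ch : C → Finset S → Finset S) (μ : S → Option C) : Prop :=
  I.IsMatching μ ∧
    ∀ s c, I.acceptable s c → I.pref s (some c) < I.pref s (μ s) →
      s ∉ Ch c (insert s (I.assigned μ c))

/-- `μ` is the student-optimal stable matching w.r.t. `Ch`: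
stable and weakly preferred by every student to every stable matching. -/
def IsOptStable (I : SchoolChoice S C) (Ch : C → Finset S → Finset S) (μ : S → Option C) :
    Prop :=
  I.IsStable Ch μ ∧ ∀ μ', I.IsStable Ch μ' → ∀ s, I.pref s (μ s) ≤ I.pref s (μ' s)

/-! Restricted (sub)instances, used by the three-stage discovery program: only students
in `A` participate and school `c` has quota `q' c`, with baseline (responsive) choice
functions. -/

def IsMatchingOn (I : SchoolChoice S C) (A : Finset S) (q' : C → ℕ) (μ : S → Option C) :
    Prop :=
  (∀ s, s ∉ A → μ s = none) ∧
    (∀ s c, μ s = some c → I.acceptable s c) ∧ ∀ c, (I.assigned μ c).card ≤ q' c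

def IsStableOn (I : SchoolChoice S C) (A : Finset S) (q' : C → ℕ) (μ : S → Option C) : Prop :=
  I.IsMatchingOn A q' μ ∧
    ∀ s ∈ A, ∀ c : C, I.acceptable s c → I.pref s (some c) < I.pref s (μ s) →
      s ∉ I.maxSet c (insert s (I.assigned μ c)) (q' c)

def IsOptStableOn (I : SchoolChoice S C) (A : Finset S) (q' : C → ℕ) (μ : S → Option C) :
    Prop :=
  I.IsStableOn A q' μ ∧
    ∀ μ', I.IsStableOn A q' μ' → ∀ s ∈ A, I.pref s (μ s) ≤ I.pref s (μ' s)

/-- `μ` is the discovery-program matching: the union of the three stage matchings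
`μ1` (general seats, all students), `μ2` (reserved seats, unmatched disadvantaged
students), `μ3` (vacant reserved seats, unmatched advantaged students). -/
def IsDisc (I : SchoolChoice S C) (μ : S → Option C) : Prop :=
  ∃ μ1 μ2 μ3 : S → Option C,
    I.IsOptStableOn Finset.univ (fun c => I.q c - I.qR c) μ1 ∧
    I.IsOptStableOn (I.dis.filter fun s => μ1 s = none) I.qR μ2 ∧
    I.IsOptStableOn ((Finset.univ \ I.dis).filter fun s => μ1 s = none)
      (fun c => I.qR c - (I.assigned μ2 c).card) μ3 ∧
    ∀ s, μ s = Option.elim (μ1 s) (Option.elim (μ2 s) (μ3 s) some) some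

/-- `(s, c)` is a blocking pair of `μ` for disadvantaged students -/
def BlockDis (I : SchoolChoice S C) (μ : S → Option C) (s : S) (c : C) : Prop :=
  s ∈ I.dis ∧ I.acceptable s c ∧ I.pref s (some c) < I.pref s (μ s) ∧
    ∃ s' ∈ I.assigned μ c, s' ∈ I.dis ∧ I.prio c s < I.prio c s'

/-- `(s, c)` is a blocking pair of `μ` for advantaged students -/
def BlockAdv (I : SchoolChoice S C) (μ : S → Option C) (s : S) (c : C) : Prop :=
  s ∉ I.dis ∧ I.acceptable s c ∧ I.pref s (some c) < I.pref s (μ s) ∧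
    ∃ s' ∈ I.assigned μ c, s' ∉ I.dis ∧ I.prio c s < I.prio c s'

/-- `(s, c)` is an in-group blocking pair of `μ` -/
def InGroupBlock (I : SchoolChoice S C) (μ : S → Option C) (s : S) (c : C) : Prop :=
  I.BlockDis μ s c ∨ I.BlockAdv μ s c

/-- all schools share a common priority order over the students -/
def CommonPriority (I : SchoolChoice S C) : Prop :=
  ∀ c c' : C, ∀ t u : S, I.prio c t < I.prio c u ↔ I.prio c' t < I.prio c' u

/-- the reservation quotas are a smart reserve w.r.t. the baseline matching `μBase` -/
def SmartReserve (I : SchoolChoice S C) (μBase : S → Option C) : Prop :=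
  ∀ c, (I.assigned μBase c ∩ I.dis).card ≤ I.qR c

end SchoolChoice

/-!
Run student-proposing deferred acceptance under `C^JSA`; since `C^JSA` is substitutable and
consistent, it ends in a stable matching. Throughout the run no disadvantaged student `s` is
rejected by her baseline school `c = μ^BASE(s)`: if she were, the reserved seats of `c` would
hold `q_c^R` disadvantaged students ranked above `s`; the smart reserve leaves room in
`μ^BASE(c)` for at most `q_c^R - 1` disadvantaged students besides `s`, so one of them, `t`, is
not at `c` under `μ^BASE`. As `t` has not been rejected by her own baseline school either, she
proposed to `c` only because she prefers it to `μ^BASE(t)`, and then `(t, c)` blocks `μ^BASE`.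
So the stable matching reached by deferred acceptance, and a fortiori the student-optimal
`μ^JSA`, gives every disadvantaged student at least her baseline school.
-/

theorem Finite.exists_isFixedPt_of_inflationary {α : Type*} [PartialOrder α] [Finite α]
    {f : α → α} (hf : ∀ a, a ≤ f a) {P : α → Prop} {a₀ : α} (h₀ : P a₀)
    (hP : ∀ a, P a → P (f a)) : ∃ a, P a ∧ Function.IsFixedPt f a := by
  obtain ⟨a, ha⟩ := (Set.toFinite {a | P a}).exists_maximal ⟨a₀, h₀⟩
  exact ⟨a, ha.prop, ha.eq_of_ge (hP a ha.prop) (hf a)⟩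

namespace SchoolChoice

section ChoiceFunction

variable {S C : Type*}

def Substitutable (Ch : C → Finset S → Finset S) : Prop :=
  ∀ c ⦃T T' : Finset S⦄ ⦃s : S⦄, T ⊆ T' → s ∈ T → s ∈ Ch c T' → s ∈ Ch c T

def Consistent (Ch : C → Finset S → Finset S) : Prop :=
  ∀ c ⦃T T' : Finset S⦄, Ch c T' ⊆ T → T ⊆ T' → Ch c T = Ch c T'

def RetainsMatched (Ch : C → Finset S → Finset S) (μ : S → Option C) (D : Finset S)
    (A : C → Finset S) : Prop :=
  ∀ s ∈ D, ∀ c, μ s = some c → s ∈ A c → s ∈ Ch c (A c)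

end ChoiceFunction

variable {S C : Type*} [Fintype S] [DecidableEq S] [Fintype C] [DecidableEq C]

lemma mem_assigned {I : SchoolChoice S C} {μ : S → Option C} {s : S} {c : C} :
    s ∈ I.assigned μ c ↔ μ s = some c := by
  simp [assigned]

section MaxSet

def above (I : SchoolChoice S C) (c : C) (T : Finset S) (s : S) : Finset S :=
  T.filter fun t => I.prio c t < I.prio c s

variable {I : SchoolChoice S C} {c : C} {T T' : Finset S} {k : ℕ} {s t : S}

lemma mem_above : t ∈ I.above c T s ↔ t ∈ T ∧ I.prio c t < I.prio c s := mem_filter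

lemma above_subset : I.above c T s ⊆ T := filter_subset _ _

lemma above_mono (h : T ⊆ T') (s : S) : I.above c T s ⊆ I.above c T' s :=
  filter_subset_filter _ h

lemma above_sdiff (X : Finset S) : I.above c (T \ X) s = I.above c T s \ X := by
  ext t
  simp only [mem_above, mem_sdiff]
  tauto

lemma notMem_above_self : s ∉ I.above c T s := fun h => lt_irrefl _ (mem_above.1 h).2

lemma card_above_lt_card (hs : s ∈ T) : #(I.above c T s) < #T :=
  card_lt_card ⟨above_subset, fun h => notMem_above_self (h hs)⟩

lemma above_ssubset_above (hs : s ∈ T) (h : I.prio c s < I.prio c t) :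
    I.above c T s ⊂ I.above c T t :=
  ⟨fun _ hx => mem_above.2 ⟨(mem_above.1 hx).1, (mem_above.1 hx).2.trans h⟩,
    fun hsub => notMem_above_self (hsub (mem_above.2 ⟨hs, h⟩))⟩

lemma injOn_card_above (T : Finset S) : Set.InjOn (fun s => #(I.above c T s)) T := by
  intro s hs t ht h
  rcases lt_trichotomy (I.prio c s) (I.prio c t) with hlt | heq | hgt
  · exact absurd h (card_lt_card (above_ssubset_above hs hlt)).ne
  · exact I.prio_inj c heq
  · exact absurd h (card_lt_card (above_ssubset_above ht hgt)).ne'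

lemma mem_maxSet : s ∈ I.maxSet c T k ↔ s ∈ T ∧ #(I.above c T s) < k := mem_filter

lemma notMem_maxSet (hs : s ∈ T) : s ∉ I.maxSet c T k ↔ k ≤ #(I.above c T s) := by
  simp [mem_maxSet, hs]

lemma maxSet_subset : I.maxSet c T k ⊆ T := filter_subset _ _

lemma card_maxSet (T : Finset S) (k : ℕ) : #(I.maxSet c T k) = min k #T := by
  have hrank : T.image (fun s => #(I.above c T s)) = range #T := by
    refine eq_of_subset_of_card_le (fun n hn => ?_) ?_
    · obtain ⟨s, hs, rfl⟩ := mem_image.1 hn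
      exact mem_range.2 (card_above_lt_card hs)
    · rw [card_range, card_image_of_injOn (injOn_card_above T)]
  have hfilter : (range #T).filter (· < k) = range (min k #T) := by
    ext n
    simp only [mem_filter, mem_range]
    omega
  calc #(I.maxSet c T k)
      = #((T.image fun s => #(I.above c T s)).filter (· < k)) := by
        rw [filter_image, card_image_of_injOn ((injOn_card_above T).mono (filter_subset _ _))]
        rfl
    _ = min k #T := by rw [hrank, hfilter, card_range]

lemma card_maxSet_le : #(I.maxSet c T k) ≤ k := (card_maxSet T k).trans_le (min_le_left _ _)

lemma card_maxSet_of_notMem (hs : s ∈ T) (hns : s ∉ I.maxSet c T k) :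
    #(I.maxSet c T k) = k := by
  have := (notMem_maxSet hs).1 hns
  have := card_above_lt_card (I := I) (c := c) hs
  rw [card_maxSet]
  omega

lemma maxSet_eq_self_of_card_lt (h : #(I.maxSet c T k) < k) : I.maxSet c T k = T :=
  eq_of_subset_of_card_le maxSet_subset (by rw [card_maxSet] at h ⊢; omega)

lemma maxSet_subset_above (hs : s ∈ T) (hns : s ∉ I.maxSet c T k) :
    I.maxSet c T k ⊆ I.above c T s := by
  intro t ht
  refine mem_above.2 ⟨maxSet_subset ht, ?_⟩
  rw [notMem_maxSet hs] at hns
  have ht' := (mem_maxSet.1 ht).2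
  by_contra! hle
  rcases hle.lt_or_eq with hlt | heq
  · have := card_lt_card (above_ssubset_above hs hlt)
    omega
  · rw [I.prio_inj c heq] at hns
    omega

lemma mem_maxSet_of_subset (h : T ⊆ T') (hs : s ∈ T) (hs' : s ∈ I.maxSet c T' k) :
    s ∈ I.maxSet c T k :=
  mem_maxSet.2 ⟨hs, (card_le_card (above_mono h s)).trans_lt (mem_maxSet.1 hs').2⟩

lemma maxSet_eq_of_subset (h₁ : I.maxSet c T' k ⊆ T) (h₂ : T ⊆ T') :
    I.maxSet c T k = I.maxSet c T' k := by
  refine Subset.antisymm (fun s hs => ?_) (fun s hs => mem_maxSet_of_subset h₂ (h₁ hs) hs)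
  have hsT' := h₂ (maxSet_subset hs)
  by_contra hns
  -- the `k` students chosen from `T'` all lie in `T` above `s`
  have hsub : I.maxSet c T' k ⊆ I.above c T s := fun t ht =>
    mem_above.2 ⟨h₁ ht, (mem_above.1 (maxSet_subset_above hsT' hns ht)).2⟩
  have := card_le_card hsub
  rw [card_maxSet_of_notMem hsT' hns] at this
  exact absurd (mem_maxSet.1 hs).2 (not_lt.2 this)

lemma mem_maxSet_insert (hs : s ∈ T) (hT : #T ≤ k) (h : I.prio c t < I.prio c s) :
    t ∈ I.maxSet c (insert t T) k := by
  refine mem_maxSet.2 ⟨mem_insert_self _ _, ?_⟩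
  have hsub : I.above c (insert t T) t ⊆ T.erase s := fun x hx => by
    obtain ⟨hx, hxt⟩ := mem_above.1 hx
    refine mem_erase.2 ⟨?_, ?_⟩
    · rintro rfl
      exact lt_asymm hxt h
    · exact (mem_insert.1 hx).resolve_left (fun hx => (hx ▸ hxt).false)
  have := card_le_card hsub
  rw [card_erase_of_mem hs] at this
  have := card_pos.2 ⟨s, hs⟩
  omega

end MaxSet

section JointSeatAllocation

def jsaPool (I : SchoolChoice S C) (c : C) (T : Finset S) : Finset S :=
  (T ∩ I.dis) \ I.jsaGen c T

variable {I : SchoolChoice S C} {c : C} {T T' : Finset S} {s : S}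

lemma mem_jsaPool : s ∈ I.jsaPool c T ↔ (s ∈ T ∧ s ∈ I.dis) ∧ s ∉ I.jsaGen c T := by
  rw [jsaPool, mem_sdiff, mem_inter]

lemma jsaRes_subset_jsaPool : I.jsaRes c T ⊆ I.jsaPool c T := maxSet_subset

lemma jsaPool_mono (h : T ⊆ T') : I.jsaPool c T ⊆ I.jsaPool c T' := by
  intro s hs
  obtain ⟨⟨hsT, hsd⟩, hsG⟩ := mem_jsaPool.1 hs
  exact mem_jsaPool.2 ⟨⟨h hsT, hsd⟩, fun hsG' => hsG (mem_maxSet_of_subset h hsT hsG')⟩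

lemma disjoint_jsaGen_jsaRes : Disjoint (I.jsaGen c T) (I.jsaRes c T) :=
  disjoint_left.2 fun _ hG hR => (mem_jsaPool.1 (jsaRes_subset_jsaPool hR)).2 hG

lemma CJSA_subset : I.CJSA c T ⊆ T := by
  refine union_subset (union_subset maxSet_subset fun s hs => ?_) fun s hs => ?_
  · exact (mem_jsaPool.1 (jsaRes_subset_jsaPool hs)).1.1
  · exact (mem_sdiff.1 (maxSet_subset hs)).1

lemma card_CJSA_le : #(I.CJSA c T) ≤ I.q c := by
  have hG : #(I.jsaGen c T) ≤ I.q c - I.qR c := card_maxSet_le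
  have hR : #(I.jsaRes c T) ≤ I.qR c := card_maxSet_le
  have := card_union_le (I.jsaGen c T) (I.jsaRes c T)
  have := I.qR_le c
  refine (card_union_le _ _).trans ?_
  have := card_maxSet_le (I := I) (c := c) (T := T \ (I.jsaGen c T ∪ I.jsaRes c T))
    (k := I.q c - #(I.jsaGen c T ∪ I.jsaRes c T))
  omega

lemma notMem_CJSA_iff : s ∉ I.CJSA c T ↔ s ∉ I.jsaGen c T ∧ s ∉ I.jsaRes c T ∧
    s ∉ I.maxSet c (T \ (I.jsaGen c T ∪ I.jsaRes c T))
      (I.q c - #(I.jsaGen c T ∪ I.jsaRes c T)) := by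
  simp only [CJSA, mem_union, not_or, and_assoc]

lemma notMem_CJSA_iff_of_mem_dis (hs : s ∈ T) (hd : s ∈ I.dis) :
    s ∉ I.CJSA c T ↔ s ∉ I.jsaGen c T ∧ s ∉ I.jsaRes c T := by
  rw [notMem_CJSA_iff]
  refine ⟨fun h => ⟨h.1, h.2.1⟩, fun ⟨hsG, hsR⟩ => ⟨hsG, hsR, fun hM => ?_⟩⟩
  -- both kinds of seats are full, so no seat is left for the last stage
  have hG : #(I.jsaGen c T) = I.q c - I.qR c := card_maxSet_of_notMem hs hsG
  have hR : #(I.jsaRes c T) = I.qR c :=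
    card_maxSet_of_notMem (mem_jsaPool.2 ⟨⟨hs, hd⟩, hsG⟩) hsR
  have := (mem_maxSet.1 hM).2
  rw [card_union_of_disjoint disjoint_jsaGen_jsaRes] at this
  have := I.qR_le c
  omega

-- The `q_c^R` seats left after the general ones go first to the disadvantaged students.
lemma notMem_CJSA_iff_of_notMem_dis (hs : s ∈ T) (hd : s ∉ I.dis) :
    s ∉ I.CJSA c T ↔ s ∉ I.jsaGen c T ∧ I.q c ≤ #(I.above c T s ∪ T ∩ I.dis) := by
  have hsR : s ∉ I.jsaRes c T := fun h => hd (mem_jsaPool.1 (jsaRes_subset_jsaPool h)).1.2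
  rw [notMem_CJSA_iff]
  simp only [hsR, not_false_eq_true, true_and]
  refine and_congr_right fun hsG => ?_
  have hsM : s ∈ T \ (I.jsaGen c T ∪ I.jsaRes c T) := mem_sdiff.2 ⟨hs, by simp [hsG, hsR]⟩
  have hGA : I.jsaGen c T ⊆ I.above c T s := maxSet_subset_above hs hsG
  have hG : #(I.jsaGen c T) = I.q c - I.qR c := card_maxSet_of_notMem hs hsG
  rw [notMem_maxSet hsM, above_sdiff, card_union_of_disjoint disjoint_jsaGen_jsaRes]
  set G := I.jsaGen c T
  set R := I.jsaRes c T
  set A := I.above c T s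
  have hR : #R ≤ I.qR c := card_maxSet_le
  have hAGR : #(A \ (G ∪ R)) + #R = #((A \ G) ∪ R) := by
    rw [show A \ (G ∪ R) = (A \ G) \ R from sdiff_sdiff_left.symm, card_sdiff_add_card]
  have hAD : #(A ∪ T ∩ I.dis) = #((A \ G) ∪ I.jsaPool c T) + #G := by
    rw [jsaPool, ← union_sdiff_distrib, card_sdiff_of_subset (hGA.trans subset_union_left)]
    have := card_le_card (hGA.trans (subset_union_left (s₂ := T ∩ I.dis)))
    omega
  -- a reserve with a vacant seat contains the whole pool
  have hRP : I.qR c ≤ #((A \ G) ∪ R) ↔ I.qR c ≤ #((A \ G) ∪ I.jsaPool c T) := by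
    refine ⟨fun h => h.trans (card_le_card (union_subset_union_right jsaRes_subset_jsaPool)),
      fun h => ?_⟩
    rcases hR.lt_or_eq with hlt | heq
    · rwa [show R = I.jsaPool c T from maxSet_eq_self_of_card_lt hlt]
    · exact heq.ge.trans (card_le_card subset_union_right)
  have := I.qR_le c
  constructor
  · intro h
    have := hRP.1 (by omega)
    omega
  · intro h
    have := hRP.2 (by omega)
    omega

lemma substitutable_CJSA : Substitutable I.CJSA := by
  intro c T T' s h hs hs'
  by_contra hrej
  refine (?_ : s ∉ I.CJSA c T') hs'
  by_cases hd : s ∈ I.dis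
  · obtain ⟨hsG, hsR⟩ := (notMem_CJSA_iff_of_mem_dis hs hd).1 hrej
    have hsP : s ∈ I.jsaPool c T := mem_jsaPool.2 ⟨⟨hs, hd⟩, hsG⟩
    exact (notMem_CJSA_iff_of_mem_dis (h hs) hd).2
      ⟨fun h' => hsG (mem_maxSet_of_subset h hs h'),
        fun h' => hsR (mem_maxSet_of_subset (jsaPool_mono h) hsP h')⟩
  · obtain ⟨hsG, hcard⟩ := (notMem_CJSA_iff_of_notMem_dis hs hd).1 hrej
    exact (notMem_CJSA_iff_of_notMem_dis (h hs) hd).2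
      ⟨fun h' => hsG (mem_maxSet_of_subset h hs h'),
        hcard.trans (card_le_card
          (union_subset_union (above_mono h s) (inter_subset_inter h le_rfl)))⟩

lemma consistent_CJSA : Consistent I.CJSA := by
  intro c T T' h₁ h₂
  have hG : I.jsaGen c T = I.jsaGen c T' :=
    maxSet_eq_of_subset (subset_union_left.trans (subset_union_left.trans h₁)) h₂
  have hR : I.jsaRes c T = I.jsaRes c T' := by
    refine maxSet_eq_of_subset (fun s hs => ?_) (jsaPool_mono h₂)
    obtain ⟨⟨-, hsd⟩, hsG⟩ := mem_jsaPool.1 (maxSet_subset hs)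
    have hsT := h₁ (subset_union_left (subset_union_right hs))
    exact mem_jsaPool.2 ⟨⟨hsT, hsd⟩, hG ▸ hsG⟩
  rw [CJSA, CJSA, hG, hR]
  congr 1
  refine maxSet_eq_of_subset (fun s hs => mem_sdiff.2 ⟨h₁ (subset_union_right hs), ?_⟩)
    (sdiff_subset_sdiff h₂ le_rfl)
  exact (mem_sdiff.1 (maxSet_subset hs)).2

lemma exists_mem_dis_above_of_notMem_CJSA {B : Finset S} (hB : #(B ∩ I.dis) ≤ I.qR c)
    (hsB : s ∈ B) (hsT : s ∈ T) (hd : s ∈ I.dis) (hrej : s ∉ I.CJSA c T) :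
    ∃ t ∈ T, t ∈ I.dis ∧ I.prio c t < I.prio c s ∧ t ∉ B := by
  obtain ⟨hsG, hsR⟩ := (notMem_CJSA_iff_of_mem_dis hsT hd).1 hrej
  have hsP : s ∈ I.jsaPool c T := mem_jsaPool.2 ⟨⟨hsT, hd⟩, hsG⟩
  have hR : #(I.jsaRes c T) = I.qR c := card_maxSet_of_notMem hsP hsR
  obtain ⟨t, htR, htB⟩ := not_subset.1 fun hsub : I.jsaRes c T ⊆ B ∩ I.dis => by
    have := card_le_card (insert_subset (mem_inter.2 ⟨hsB, hd⟩) hsub)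
    rw [card_insert_of_notMem hsR] at this
    omega
  obtain ⟨⟨htT, htd⟩, -⟩ := mem_jsaPool.1 (jsaRes_subset_jsaPool htR)
  exact ⟨t, htT, htd, (mem_above.1 (maxSet_subset_above hsP hsR htR)).2,
    fun ht => htB (mem_inter.2 ⟨ht, htd⟩)⟩

end JointSeatAllocation

section DeferredAcceptance

-- A proposal history `A` records in `A c` the students who have proposed to `c` so far.
open Classical in
noncomputable def openSchools (I : SchoolChoice S C) (Ch : C → Finset S → Finset S)
    (A : C → Finset S) (s : S) : Finset C :=
  univ.filter fun c => I.acceptable s c ∧ (s ∈ A c → s ∈ Ch c (A c))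

noncomputable def bestOpen (I : SchoolChoice S C) (Ch : C → Finset S → Finset S)
    (A : C → Finset S) (s : S) : Option C :=
  if h : (I.openSchools Ch A s).Nonempty then
    some (exists_min_image _ (fun c => I.pref s (some c)) h).choose
  else none

noncomputable def propose (I : SchoolChoice S C) (Ch : C → Finset S → Finset S)
    (A : C → Finset S) : C → Finset S :=
  fun c => A c ∪ univ.filter fun s => I.bestOpen Ch A s = some c

structure ProposesInOrder (I : SchoolChoice S C) (Ch : C → Finset S → Finset S)
    (A : C → Finset S) : Prop where
  acceptable : ∀ c, ∀ s ∈ A c, I.acceptable s c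
  rejected_of_pref_lt : ∀ c, ∀ s ∈ A c, ∀ c', I.acceptable s c' →
    I.pref s (some c') < I.pref s (some c) → s ∈ A c' ∧ s ∉ Ch c' (A c')

variable {I : SchoolChoice S C} {Ch : C → Finset S → Finset S} {A : C → Finset S} {s : S}
  {c c' : C}

lemma mem_openSchools :
    c ∈ I.openSchools Ch A s ↔ I.acceptable s c ∧ (s ∈ A c → s ∈ Ch c (A c)) := by
  simp [openSchools]

lemma bestOpen_spec (h : I.bestOpen Ch A s = some c) :
    c ∈ I.openSchools Ch A s ∧
      ∀ c' ∈ I.openSchools Ch A s, I.pref s (some c) ≤ I.pref s (some c') := by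
  unfold bestOpen at h
  split_ifs at h with hne
  obtain rfl := Option.some_injective _ h
  exact (exists_min_image _ (fun c => I.pref s (some c)) hne).choose_spec

lemma exists_bestOpen_le (h : c ∈ I.openSchools Ch A s) :
    ∃ c₀, I.bestOpen Ch A s = some c₀ ∧ I.pref s (some c₀) ≤ I.pref s (some c) := by
  have hne : (I.openSchools Ch A s).Nonempty := ⟨c, h⟩
  exact ⟨_, dif_pos hne,
    (exists_min_image _ (fun c => I.pref s (some c)) hne).choose_spec.2 c h⟩

lemma pref_bestOpen_le_none : I.pref s (I.bestOpen Ch A s) ≤ I.pref s none := by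
  cases h : I.bestOpen Ch A s with
  | none => exact le_rfl
  | some c => exact (mem_openSchools.1 (bestOpen_spec h).1).1.le

lemma mem_propose : s ∈ I.propose Ch A c ↔ s ∈ A c ∨ I.bestOpen Ch A s = some c := by
  simp [propose]

lemma le_propose (A : C → Finset S) : A ≤ I.propose Ch A := fun _ => subset_union_left

lemma ProposesInOrder.rejected_of_mem_propose (hA : I.ProposesInOrder Ch A)
    (hs : s ∈ I.propose Ch A c) (hc' : I.acceptable s c')
    (hlt : I.pref s (some c') < I.pref s (some c)) : s ∈ A c' ∧ s ∉ Ch c' (A c') := by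
  rcases mem_propose.1 hs with hs | hs
  · exact hA.rejected_of_pref_lt c s hs c' hc' hlt
  · by_contra hrej
    have hopen : c' ∈ I.openSchools Ch A s :=
      mem_openSchools.2 ⟨hc', fun hmem => by_contra fun hns => hrej ⟨hmem, hns⟩⟩
    exact absurd ((bestOpen_spec hs).2 c' hopen) (not_le.2 hlt)

lemma ProposesInOrder.propose (hsubst : Substitutable Ch) (hA : I.ProposesInOrder Ch A) :
    I.ProposesInOrder Ch (I.propose Ch A) where
  acceptable c s hs := (mem_propose.1 hs).elim (hA.acceptable c s)
    fun h => (mem_openSchools.1 (bestOpen_spec h).1).1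
  rejected_of_pref_lt c s hs c' hc' hlt := by
    obtain ⟨hsA, hrej⟩ := hA.rejected_of_mem_propose hs hc' hlt
    exact ⟨le_propose A c' hsA, fun h => hrej (hsubst c' (le_propose A c') hsA h)⟩

lemma ProposesInOrder.assigned_bestOpen (hsub : ∀ c T, Ch c T ⊆ T)
    (hA : I.ProposesInOrder Ch A) (hfix : Function.IsFixedPt (I.propose Ch) A) (c : C) :
    I.assigned (I.bestOpen Ch A) c = Ch c (A c) := by
  ext s
  rw [mem_assigned]
  constructor
  · intro h
    have hsA : s ∈ A c := hfix ▸ mem_propose.2 (Or.inr h)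
    exact (mem_openSchools.1 (bestOpen_spec h).1).2 hsA
  · intro hs
    have hsA := hsub c (A c) hs
    obtain ⟨c₀, hc₀, hle⟩ :=
      exists_bestOpen_le (mem_openSchools.2 ⟨hA.acceptable c s hsA, fun _ => hs⟩)
    rcases hle.lt_or_eq with hlt | heq
    · obtain ⟨hacc, hopen⟩ := mem_openSchools.1 (bestOpen_spec hc₀).1
      obtain ⟨hsA₀, hrej⟩ := hA.rejected_of_pref_lt c s hsA c₀ hacc hlt
      exact absurd (hopen hsA₀) hrej
    · rw [hc₀, I.pref_inj s heq]

lemma ProposesInOrder.isStable_bestOpen (hsub : ∀ c T, Ch c T ⊆ T)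
    (hcard : ∀ c T, #(Ch c T) ≤ I.q c) (hcons : Consistent Ch) (hA : I.ProposesInOrder Ch A)
    (hfix : Function.IsFixedPt (I.propose Ch) A) : I.IsStable Ch (I.bestOpen Ch A) := by
  have hassigned := hA.assigned_bestOpen hsub hfix
  refine ⟨⟨fun s c h => (mem_openSchools.1 (bestOpen_spec h).1).1,
    fun c => hassigned c ▸ hcard c _⟩, fun s c hc hlt hmem => ?_⟩
  by_cases hsA : s ∈ A c
  · -- `c` rejected `s`, and consistency lets `c` reject her again
    rw [hassigned, hcons c (subset_insert _ _) (insert_subset hsA (hsub c _)),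
      ← hassigned, mem_assigned] at hmem
    rw [hmem] at hlt
    exact lt_irrefl _ hlt
  · obtain ⟨c₀, hc₀, hle⟩ :=
      exists_bestOpen_le (mem_openSchools.2 ⟨hc, fun h => absurd h hsA⟩)
    rw [hc₀] at hlt
    omega

lemma RetainsMatched.pref_bestOpen_le {μ : S → Option C} {D : Finset S}
    (hR : RetainsMatched Ch μ D A) (hμ : ∀ s c, μ s = some c → I.acceptable s c)
    (hs : s ∈ D) : I.pref s (I.bestOpen Ch A s) ≤ I.pref s (μ s) := by
  cases h : μ s with
  | none => exact pref_bestOpen_le_none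
  | some c =>
    obtain ⟨c₀, hc₀, hle⟩ :=
      exists_bestOpen_le (mem_openSchools.2 ⟨hμ s c h, hR s hs c h⟩)
    rwa [hc₀]

end DeferredAcceptance

variable {I : SchoolChoice S C} {μB : S → Option C} {A : C → Finset S}

lemma retainsMatched_propose_CJSA (hB : I.IsStable I.CBASE μB) (hsmart : I.SmartReserve μB)
    (hA : I.ProposesInOrder I.CJSA A) (hR : RetainsMatched I.CJSA μB I.dis A) :
    RetainsMatched I.CJSA μB I.dis (I.propose I.CJSA A) := by
  intro s hsd c hsc hsA
  by_contra hrej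
  obtain ⟨t, htA, htd, hts, htB⟩ :=
    exists_mem_dis_above_of_notMem_CJSA (hsmart c) (mem_assigned.2 hsc) hsA hsd hrej
  have htc : I.acceptable t c := (hA.propose substitutable_CJSA).acceptable c t htA
  rcases lt_trichotomy (I.pref t (some c)) (I.pref t (μB t)) with hlt | heq | hgt
  · exact hB.2 t c htc hlt (mem_maxSet_insert (mem_assigned.2 hsc) (hB.1.2 c) hts)
  · exact htB (mem_assigned.2 (I.pref_inj t heq).symm)
  · cases hμt : μB t with
    | none =>
      rw [hμt] at hgt
      exact lt_asymm htc hgt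
    | some c₀ =>
      rw [hμt] at hgt
      obtain ⟨htA₀, htrej⟩ := hA.rejected_of_mem_propose htA (hB.1.1 t c₀ hμt) hgt
      exact htrej (hR t htd c₀ hμt htA₀)

end SchoolChoice

/-- under a smart reserve, μ^JSA weakly dominates μ^BASE for
disadvantaged students. -/
theorem JSA_smart_dominates_BASE {S C : Type*} [Fintype S] [DecidableEq S] [Fintype C] [DecidableEq C]
    (I : SchoolChoice S C) (μB μJ : S → Option C)
    (hB : I.IsOptStable I.CBASE μB) (hJ : I.IsOptStable I.CJSA μJ)
    (hsmart : I.SmartReserve μB) :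
    ∀ s ∈ I.dis, I.pref s (μJ s) ≤ I.pref s (μB s) := by
  obtain ⟨A, ⟨hA, hR⟩, hfix⟩ := Finite.exists_isFixedPt_of_inflationary I.le_propose
    (P := fun A => I.ProposesInOrder I.CJSA A ∧ SchoolChoice.RetainsMatched I.CJSA μB I.dis A)
    (a₀ := ⊥) ⟨⟨by simp, by simp⟩, by simp [SchoolChoice.RetainsMatched]⟩
    fun A ⟨hA, hR⟩ => ⟨hA.propose I.substitutable_CJSA,
      SchoolChoice.retainsMatched_propose_CJSA hB.1 hsmart hA hR⟩
  have hstable := hA.isStable_bestOpen (fun _ _ => I.CJSA_subset) (fun _ _ => I.card_CJSA_le)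
    I.consistent_CJSA hfix
  intro s hs
  exact (hJ.2 _ hstable s).trans (hR.pref_bestOpen_le hB.1.1.1 hs)
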